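/- arXiv:1811.04514 — 7 statements merged into one kernel-verified Lean document; each statement's English description precedes it below -/
import Mathlib

section
/- Let f : ℝ \ {0} → ℝ be defined by f(x) = m if 1/(m+1)! ≤ |x| < 1/m! for m ∈ ℕ, and f(x) = 0 if |x| ≥ 1. Then for every λ > 0, the series ∑_{n=1}^∞ (1/n!) ∫_ℝ (λ f(x))^n dx converges (indeed it is bounded by e^{e^λ}). -/
/-!
On the shell `1/(m+1)! ≤ |x| < 1/m!`, whose measure is at most `2/m!`, the integrand
`(λ f)^(n+1)` equals `(λ m)^(n+1)`. Summing over `n` first turns the series into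
`∑ₘ (e^{λ m} - 1)·|shell m| ≤ 2 ∑ₘ (e^λ)^m / m! = 2 e^{e^λ}`.
-/

open MeasureTheory ENNReal
open scoped Nat

lemma exists_succ_le_and_lt_of_exists_le {α : Type*} [LinearOrder α] {u : ℕ → α} {a : α}
    (h₀ : a < u 0) (h : ∃ n, u n ≤ a) : ∃ m, u (m + 1) ≤ a ∧ a < u m := by
  by_contra! H
  have hlt : ∀ m, a < u m := by
    intro m
    induction m with
    | zero => exact h₀
    | succ m ih => exact lt_of_not_ge fun hm => ih.not_ge (H m hm)
  obtain ⟨n, hn⟩ := h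
  exact (hlt n).not_ge hn

lemma ENNReal.tsum_inv_factorial_mul_ofReal_pow {t : ℝ} (ht : 0 ≤ t) :
    ∑' k : ℕ, ((k ! : ℝ≥0∞))⁻¹ * ENNReal.ofReal (t ^ k) =
      ENNReal.ofReal (Real.exp t) := by
  have hterm (k : ℕ) :
      ((k ! : ℝ≥0∞))⁻¹ * ENNReal.ofReal (t ^ k) = ENNReal.ofReal (t ^ k / k !) := by
    rw [div_eq_mul_inv, ENNReal.ofReal_mul (by positivity), mul_comm,
      ENNReal.ofReal_inv_of_pos (by positivity), ENNReal.ofReal_natCast]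
  have hsum := NormedSpace.expSeries_div_hasSum_exp t
  rw [← Real.exp_eq_exp_ℝ] at hsum
  simp_rw [hterm]
  rw [← ENNReal.ofReal_tsum_of_nonneg (fun k => by positivity) hsum.summable, hsum.tsum_eq]

lemma ENNReal.tsum_inv_factorial_succ_mul_ofReal_pow_succ_le {t : ℝ} (ht : 0 ≤ t) :
    ∑' n : ℕ, (((n + 1) ! : ℝ≥0∞))⁻¹ * ENNReal.ofReal (t ^ (n + 1)) ≤
      ENNReal.ofReal (Real.exp t) := by
  rw [← ENNReal.tsum_inv_factorial_mul_ofReal_pow ht]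
  exact ENNReal.tsum_comp_le_tsum_of_injective (add_left_injective 1)
    (fun k => ((k ! : ℝ≥0∞))⁻¹ * ENNReal.ofReal (t ^ k))

def factorialShell (m : ℕ) : Set ℝ :=
  (fun x : ℝ => |x|) ⁻¹' Set.Ico (1 / ((m + 1) ! : ℝ)) (1 / (m ! : ℝ))

lemma measurableSet_factorialShell (m : ℕ) : MeasurableSet (factorialShell m) :=
  continuous_abs.measurable measurableSet_Ico

lemma volume_factorialShell_le (m : ℕ) :
    volume (factorialShell m) ≤ 2 * ((m ! : ℝ≥0∞))⁻¹ := by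
  have hsub : factorialShell m ⊆ Set.Ioo (-(1 / (m ! : ℝ))) (1 / (m ! : ℝ)) :=
    fun x hx => abs_lt.mp hx.2
  calc volume (factorialShell m) ≤ volume (Set.Ioo (-(1 / (m ! : ℝ))) (1 / (m ! : ℝ))) :=
        measure_mono hsub
    _ = ENNReal.ofReal 2 * ENNReal.ofReal (m ! : ℝ)⁻¹ := by
        rw [Real.volume_Ioo, ← ENNReal.ofReal_mul zero_le_two]
        ring_nf
    _ = 2 * ((m ! : ℝ≥0∞))⁻¹ := by
        rw [ENNReal.ofReal_inv_of_pos (by positivity), ENNReal.ofReal_natCast, ENNReal.ofReal_ofNat]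

lemma exists_mem_factorialShell {x : ℝ} (hx₀ : x ≠ 0) (hx₁ : |x| < 1) :
    ∃ m, x ∈ factorialShell m := by
  obtain ⟨n, hn⟩ := exists_nat_one_div_lt (abs_pos.mpr hx₀)
  have hsmall : 1 / ((n + 1) ! : ℝ) ≤ |x| := by
    refine le_trans ?_ hn.le
    gcongr
    exact_mod_cast Nat.self_le_factorial (n + 1)
  exact exists_succ_le_and_lt_of_exists_le (u := fun m => 1 / (m ! : ℝ))
    (by simpa using hx₁) ⟨n + 1, hsmall⟩

section StepFunction

variable {f : ℝ → ℝ}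
    (hf1 : ∀ x : ℝ, x ≠ 0 → ∀ m : ℕ,
      1 / (Nat.factorial (m + 1) : ℝ) ≤ |x| → |x| < 1 / (Nat.factorial m : ℝ) → f x = m)
    (hf2 : ∀ x : ℝ, 1 ≤ |x| → f x = 0)
include hf1 hf2

lemma le_tsum_indicator_factorialShell {g : ℝ → ℝ≥0∞} (hg : g 0 = 0) {x : ℝ}
    (hx : x ≠ 0) :
    g (f x) ≤ ∑' m : ℕ, (factorialShell m).indicator (fun _ => g m) x := by
  rcases le_or_gt 1 |x| with hx₁ | hx₁
  · simp [hf2 x hx₁, hg]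
  · obtain ⟨m, hm⟩ := exists_mem_factorialShell hx hx₁
    calc g (f x) = (factorialShell m).indicator (fun _ => g m) x := by
          rw [Set.indicator_of_mem hm, hf1 x hx m hm.1 hm.2]
      _ ≤ _ := ENNReal.le_tsum m

lemma lintegral_comp_le_tsum_mul_inv_factorial {g : ℝ → ℝ≥0∞} (hg : g 0 = 0) :
    ∫⁻ x, g (f x) ≤ ∑' m : ℕ, g m * (2 * ((m ! : ℝ≥0∞))⁻¹) := by
  have hae :
      ∀ᵐ x : ℝ, g (f x) ≤ ∑' m : ℕ, (factorialShell m).indicator (fun _ => g m) x := by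
    filter_upwards [compl_mem_ae_iff.mpr (Real.volume_singleton (a := 0))] with x hx
    exact le_tsum_indicator_factorialShell hf1 hf2 hg hx
  refine (lintegral_mono_ae hae).trans ?_
  rw [lintegral_tsum fun m =>
    (measurable_const.indicator (measurableSet_factorialShell m)).aemeasurable]
  refine ENNReal.tsum_le_tsum fun m => ?_
  rw [lintegral_indicator_const (measurableSet_factorialShell m)]
  exact mul_le_mul_right (volume_factorialShell_le m) _

end StepFunction

/-- for the unbounded step function `f` (with `f x = m` on
`1/(m+1)! ≤ |x| < 1/m!` and `f x = 0` for `|x| ≥ 1`), the series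
`∑_{n≥1} λ^n/n! ∫ f^n dx` converges for every `λ > 0`. -/
theorem stmt0 (f : ℝ → ℝ)
    (hf1 : ∀ x : ℝ, x ≠ 0 → ∀ m : ℕ,
      1 / (Nat.factorial (m + 1) : ℝ) ≤ |x| → |x| < 1 / (Nat.factorial m : ℝ) → f x = m)
    (hf2 : ∀ x : ℝ, 1 ≤ |x| → f x = 0)
    (lam : ℝ) (hlam : 0 < lam) :
    ∑' n : ℕ, ((Nat.factorial (n + 1) : ℝ≥0∞))⁻¹ *
      ∫⁻ x : ℝ, ENNReal.ofReal ((lam * f x) ^ (n + 1)) ≠ ⊤ := by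
  set w : ℕ → ℝ≥0∞ := fun m => 2 * ((m ! : ℝ≥0∞))⁻¹
  refine ne_top_of_le_ne_top (b := 2 * ENNReal.ofReal (Real.exp (Real.exp lam))) (by finiteness) ?_
  calc ∑' n : ℕ, (((n + 1) ! : ℝ≥0∞))⁻¹ *
        ∫⁻ x : ℝ, ENNReal.ofReal ((lam * f x) ^ (n + 1))
      ≤ ∑' n : ℕ, (((n + 1) ! : ℝ≥0∞))⁻¹ *
          ∑' m : ℕ, ENNReal.ofReal ((lam * m) ^ (n + 1)) * w m := by
        gcongr with n
        exact lintegral_comp_le_tsum_mul_inv_factorial hf1 hf2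
          (g := fun t => ENNReal.ofReal ((lam * t) ^ (n + 1))) (by simp)
    _ = ∑' m : ℕ, (∑' n : ℕ, (((n + 1) ! : ℝ≥0∞))⁻¹ *
          ENNReal.ofReal ((lam * m) ^ (n + 1))) * w m := by
        simp_rw [← ENNReal.tsum_mul_left, ← ENNReal.tsum_mul_right, mul_assoc]
        exact ENNReal.tsum_comm
    _ ≤ ∑' m : ℕ, ENNReal.ofReal (Real.exp (lam * m)) * w m := by
        gcongr with m
        exact ENNReal.tsum_inv_factorial_succ_mul_ofReal_pow_succ_le (by positivity)
    _ = 2 * ENNReal.ofReal (Real.exp (Real.exp lam)) := by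
        simp_rw [w, mul_comm lam, Real.exp_nat_mul, ← ENNReal.tsum_inv_factorial_mul_ofReal_pow
          (Real.exp_nonneg lam), ← ENNReal.tsum_mul_left]
        congr 1 with m
        ring
end

section
/- Let μ be a measure and 1 ≤ p < ∞. Define E_p = {f ∈ L^p(μ) : ∑_{n=1}^∞ ‖|f|^n‖_p / n! < ∞} (where ‖|f|^n‖_p = (∫ |f|^{np} dμ)^{1/p}). Then E_p is a balanced convex set: if f ∈ E_p and |λ| ≤ 1 then λf ∈ E_p, and if f, g ∈ E_p and 0 ≤ t ≤ 1 then tf + (1-t)g ∈ E_p. -/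
/-!
Both properties come from pointwise bounds. For `|c| ≤ 1` one has `|c f| ≤ |f|`, and
`|t f + (1 - t) g| ≤ max |f| |g|`, whose `n`-th power is at most `|f|^n + |g|^n`. The `L^p`
quasi-triangle inequality (a genuine triangle inequality for `p ≥ 1`) then bounds the
exponential series of the combination by a constant multiple of the series of `f` and `g`.
-/

open MeasureTheory ENNReal

theorem pow_max_abs_le_add (a b : ℝ) (k : ℕ) : max |a| |b| ^ k ≤ |a| ^ k + |b| ^ k := by
  rcases le_total |a| |b| with hab | hab
  · rw [max_eq_right hab]
    exact le_add_of_nonneg_left (pow_nonneg (abs_nonneg a) k)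
  · rw [max_eq_left hab]
    exact le_add_of_nonneg_right (pow_nonneg (abs_nonneg b) k)

theorem abs_convex_comb_le_max {t : ℝ} (ht₀ : 0 ≤ t) (ht₁ : t ≤ 1) (a b : ℝ) :
    |t * a + (1 - t) * b| ≤ max |a| |b| :=
  calc |t * a + (1 - t) * b| ≤ t * |a| + (1 - t) * |b| := by
        simpa [abs_mul, abs_of_nonneg ht₀, abs_of_nonneg (sub_nonneg.2 ht₁)] using
          abs_add_le (t * a) ((1 - t) * b)
    _ ≤ t * max |a| |b| + (1 - t) * max |a| |b| := by
        have := mul_le_mul_of_nonneg_left (le_max_left |a| |b|) ht₀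
        have := mul_le_mul_of_nonneg_left (le_max_right |a| |b|) (sub_nonneg.2 ht₁)
        linarith
    _ = max |a| |b| := by ring

noncomputable section

namespace MeasureTheory

variable {α : Type*} [MeasurableSpace α] {μ : Measure α} {p : ℝ≥0∞}

/-- The series `∑_{n ≥ 1} ‖|f|^n‖_p / n!` defining the class `E_p`. -/
def expLpSeries (f : α → ℝ) (p : ℝ≥0∞) (μ : Measure α) : ℝ≥0∞ :=
  ∑' n : ℕ, ((Nat.factorial (n + 1) : ℝ≥0∞))⁻¹ * eLpNorm (fun x => |f x| ^ (n + 1)) p μ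

theorem expLpSeries_mono {f g : α → ℝ} (h : ∀ x, |f x| ≤ |g x|) :
    expLpSeries f p μ ≤ expLpSeries g p μ := by
  refine ENNReal.tsum_le_tsum fun n => mul_le_mul_right (eLpNorm_mono fun x => ?_) _
  simp only [Real.norm_eq_abs, abs_pow, abs_abs]
  exact pow_le_pow_left₀ (abs_nonneg _) (h x) _

theorem expLpSeries_le_of_abs_le_max {f g h : α → ℝ} (hf : AEStronglyMeasurable f μ)
    (hg : AEStronglyMeasurable g μ) (hh : ∀ x, |h x| ≤ max |f x| |g x|) :
    expLpSeries h p μ ≤ LpAddConst p * (expLpSeries f p μ + expLpSeries g p μ) := by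
  have hterm : ∀ n : ℕ, eLpNorm (fun x => |h x| ^ (n + 1)) p μ ≤
      LpAddConst p * (eLpNorm (fun x => |f x| ^ (n + 1)) p μ +
        eLpNorm (fun x => |g x| ^ (n + 1)) p μ) := by
    intro n
    calc eLpNorm (fun x => |h x| ^ (n + 1)) p μ
        ≤ eLpNorm ((fun x => |f x| ^ (n + 1)) + fun x => |g x| ^ (n + 1)) p μ := by
          refine eLpNorm_mono_real fun x => ?_
          simp only [Real.norm_eq_abs, abs_pow, abs_abs]
          exact (pow_le_pow_left₀ (abs_nonneg _) (hh x) _).trans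
            (pow_max_abs_le_add (f x) (g x) (n + 1))
      _ ≤ _ := eLpNorm_add_le' (hf.norm.pow _) (hg.norm.pow _) p
  calc expLpSeries h p μ
      ≤ ∑' n : ℕ, LpAddConst p * (((Nat.factorial (n + 1) : ℝ≥0∞))⁻¹ *
          eLpNorm (fun x => |f x| ^ (n + 1)) p μ + ((Nat.factorial (n + 1) : ℝ≥0∞))⁻¹ *
          eLpNorm (fun x => |g x| ^ (n + 1)) p μ) := by
        refine ENNReal.tsum_le_tsum fun n => ?_
        rw [← mul_add, mul_left_comm]
        exact mul_le_mul_right (hterm n) _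
    _ = LpAddConst p * (expLpSeries f p μ + expLpSeries g p μ) := by
        rw [ENNReal.tsum_mul_left, ENNReal.tsum_add, expLpSeries, expLpSeries]

end MeasureTheory

end

theorem stmt4_general {α : Type*} [MeasurableSpace α] (μ : Measure α)
    (p : ℝ≥0∞) (f g : α → ℝ)
    (hf : AEStronglyMeasurable f μ) (hg : AEStronglyMeasurable g μ)
    (hfE : ∑' n : ℕ, ((Nat.factorial (n + 1) : ℝ≥0∞))⁻¹ *
        eLpNorm (fun x => |f x| ^ (n + 1)) p μ ≠ ⊤)
    (hgE : ∑' n : ℕ, ((Nat.factorial (n + 1) : ℝ≥0∞))⁻¹ *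
        eLpNorm (fun x => |g x| ^ (n + 1)) p μ ≠ ⊤) :
    (∀ c : ℝ, |c| ≤ 1 →
      ∑' n : ℕ, ((Nat.factorial (n + 1) : ℝ≥0∞))⁻¹ *
        eLpNorm (fun x => |c * f x| ^ (n + 1)) p μ ≠ ⊤) ∧
    (∀ t : ℝ, 0 ≤ t → t ≤ 1 →
      ∑' n : ℕ, ((Nat.factorial (n + 1) : ℝ≥0∞))⁻¹ *
        eLpNorm (fun x => |t * f x + (1 - t) * g x| ^ (n + 1)) p μ ≠ ⊤) := by
  change expLpSeries f p μ ≠ ⊤ at hfE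
  change expLpSeries g p μ ≠ ⊤ at hgE
  refine ⟨fun c hc => ?_, fun t ht₀ ht₁ => ?_⟩
  · have hcf : ∀ x, |c * f x| ≤ |f x| := fun x => by
      rw [abs_mul]
      exact mul_le_of_le_one_left (abs_nonneg _) hc
    exact ne_top_of_le_ne_top hfE (expLpSeries_mono hcf)
  · have hbound : expLpSeries (fun x => t * f x + (1 - t) * g x) p μ ≤
        LpAddConst p * (expLpSeries f p μ + expLpSeries g p μ) :=
      expLpSeries_le_of_abs_le_max hf hg fun x => abs_convex_comb_le_max ht₀ ht₁ (f x) (g x)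
    exact ne_top_of_le_ne_top
      (ENNReal.mul_ne_top (LpAddConst_lt_top p).ne (ENNReal.add_ne_top.2 ⟨hfE, hgE⟩)) hbound

/-- the set `E_p` of `(p)`-exponentiable functions
(`∑_{n≥1} ‖|f|^n‖_p / n! < ∞`) is balanced and convex. -/
theorem stmt4 {α : Type*} [MeasurableSpace α] (μ : Measure α)
    (p : ℝ≥0∞) (hp : 1 ≤ p) (hp' : p ≠ ⊤) (f g : α → ℝ)
    (hf : AEStronglyMeasurable f μ) (hg : AEStronglyMeasurable g μ)
    (hfLp : MemLp f p μ) (hgLp : MemLp g p μ)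
    (hfE : ∑' n : ℕ, ((Nat.factorial (n + 1) : ℝ≥0∞))⁻¹ *
        eLpNorm (fun x => |f x| ^ (n + 1)) p μ ≠ ⊤)
    (hgE : ∑' n : ℕ, ((Nat.factorial (n + 1) : ℝ≥0∞))⁻¹ *
        eLpNorm (fun x => |g x| ^ (n + 1)) p μ ≠ ⊤) :
    (∀ c : ℝ, |c| ≤ 1 →
      ∑' n : ℕ, ((Nat.factorial (n + 1) : ℝ≥0∞))⁻¹ *
        eLpNorm (fun x => |c * f x| ^ (n + 1)) p μ ≠ ⊤) ∧
    (∀ t : ℝ, 0 ≤ t → t ≤ 1 →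
      ∑' n : ℕ, ((Nat.factorial (n + 1) : ℝ≥0∞))⁻¹ *
        eLpNorm (fun x => |t * f x + (1 - t) * g x| ^ (n + 1)) p μ ≠ ⊤) :=
  stmt4_general μ p f g hf hg hfE hgE
end

section
/- Let μ be a measure and 1 ≤ p, q, r ≤ ∞ with 1/p + 1/q = 1/r. If f and g are nonnegative measurable functions with ∑_{n=1}^∞ (1/n!) ∫ f^{np} dμ < ∞ and ∑_{n=1}^∞ (1/n!) ∫ g^{nq} dμ < ∞, then ∑_{n=1}^∞ (1/n!) ∫ (fg)^{nr} dμ < ∞. -/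
open MeasureTheory ENNReal

/-!
Write `s = r/p` and `t = r/q`, so that `s + t = 1`. For each `n`, Hölder's inequality for the
measure `μ / (n+1)!` bounds the `n`-th term of the series for `fg` by `aₙ ^ s * bₙ ^ t`, where
`aₙ` and `bₙ` are the `n`-th terms of the series for `f` and `g` (the exponents scale by `n + 1`
without changing `s` and `t`). Hölder's inequality for the counting measure on `ℕ` then bounds
`∑ aₙ ^ s * bₙ ^ t` by `(∑ aₙ) ^ s * (∑ bₙ) ^ t`.
-/

namespace ENNReal

theorem tsum_rpow_mul_rpow_le {ι : Type*} (a b : ι → ℝ≥0∞) {s t : ℝ} (hs : 0 ≤ s) (ht : 0 ≤ t)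
    (hst : s + t = 1) : ∑' i, a i ^ s * b i ^ t ≤ (∑' i, a i) ^ s * (∑' i, b i) ^ t := by
  let : MeasurableSpace ι := ⊤
  simpa only [lintegral_count' measurable_from_top] using
    lintegral_mul_norm_pow_le (μ := Measure.count) measurable_from_top.aemeasurable
      measurable_from_top.aemeasurable hs ht hst

theorem lintegral_mul_rpow_le {α : Type*} [MeasurableSpace α] (μ : Measure α) {p q r : ℝ}
    (hp : 0 < p) (hq : 0 < q) (hr : 0 ≤ r) (hpqr : r / p + r / q = 1) {f g : α → ℝ≥0∞}
    (hf : AEMeasurable f μ) (hg : AEMeasurable g μ) :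
    ∫⁻ x, (f x * g x) ^ r ∂μ ≤ (∫⁻ x, f x ^ p ∂μ) ^ (r / p) * (∫⁻ x, g x ^ q ∂μ) ^ (r / q) := by
  calc ∫⁻ x, (f x * g x) ^ r ∂μ = ∫⁻ x, (f x ^ p) ^ (r / p) * (g x ^ q) ^ (r / q) ∂μ := by
        refine lintegral_congr fun x => ?_
        rw [← rpow_mul, ← rpow_mul, mul_div_cancel₀ r hp.ne', mul_div_cancel₀ r hq.ne',
          mul_rpow_of_nonneg _ _ hr]
    _ ≤ _ := lintegral_mul_norm_pow_le (hf.pow_const p) (hg.pow_const q) (by positivity)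
        (by positivity) hpqr

end ENNReal

/-- Hölder-type stability of exponentiability under products:
if `1/p + 1/q = 1/r` and `f` is `p`-exponentiable and `g` is `q`-exponentiable,
then `fg` is `r`-exponentiable. -/
theorem stmt6 {α : Type*} [MeasurableSpace α] (μ : Measure α)
    (p q r : ℝ) (hp : 1 ≤ p) (hq : 1 ≤ q) (hr : 1 ≤ r) (hpqr : 1 / p + 1 / q = 1 / r)
    (f g : α → ℝ≥0∞) (hf : Measurable f) (hg : Measurable g)
    (hfE : ∑' n : ℕ, ((Nat.factorial (n + 1) : ℝ≥0∞))⁻¹ *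
        ∫⁻ x, f x ^ (((n : ℝ) + 1) * p) ∂μ ≠ ⊤)
    (hgE : ∑' n : ℕ, ((Nat.factorial (n + 1) : ℝ≥0∞))⁻¹ *
        ∫⁻ x, g x ^ (((n : ℝ) + 1) * q) ∂μ ≠ ⊤) :
    ∑' n : ℕ, ((Nat.factorial (n + 1) : ℝ≥0∞))⁻¹ *
        ∫⁻ x, (f x * g x) ^ (((n : ℝ) + 1) * r) ∂μ ≠ ⊤ := by
  have hp₀ : 0 < p := by linarith
  have hq₀ : 0 < q := by linarith
  have hr₀ : 0 < r := by linarith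
  have hrpq : r / p + r / q = 1 := by
    rw [div_eq_mul_one_div r p, div_eq_mul_one_div r q, ← mul_add, hpqr,
      mul_one_div_cancel hr₀.ne']
  have hterm : ∀ n : ℕ, ((Nat.factorial (n + 1) : ℝ≥0∞))⁻¹ *
      ∫⁻ x, (f x * g x) ^ (((n : ℝ) + 1) * r) ∂μ ≤
      (((Nat.factorial (n + 1) : ℝ≥0∞))⁻¹ * ∫⁻ x, f x ^ (((n : ℝ) + 1) * p) ∂μ) ^ (r / p) *
      (((Nat.factorial (n + 1) : ℝ≥0∞))⁻¹ * ∫⁻ x, g x ^ (((n : ℝ) + 1) * q) ∂μ) ^ (r / q) := by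
    intro n
    have hN : 0 < (n : ℝ) + 1 := by positivity
    have hscaled := lintegral_mul_rpow_le (r := ((n : ℝ) + 1) * r)
      (((Nat.factorial (n + 1) : ℝ≥0∞))⁻¹ • μ) (mul_pos hN hp₀) (mul_pos hN hq₀) (by positivity)
      (by rwa [mul_div_mul_left _ _ hN.ne', mul_div_mul_left _ _ hN.ne']) hf.aemeasurable
      hg.aemeasurable
    simpa only [lintegral_smul_measure, smul_eq_mul, mul_div_mul_left _ _ hN.ne'] using hscaled
  refine ne_top_of_le_ne_top ?_ ((ENNReal.tsum_le_tsum hterm).trans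
    (tsum_rpow_mul_rpow_le _ _ (by positivity) (by positivity) hrpq))
  exact mul_ne_top (rpow_ne_top_of_nonneg (by positivity) hfE)
    (rpow_ne_top_of_nonneg (by positivity) hgE)
end

section
/- Let μ be a measure and 1 ≤ p < ∞. Define E_{p,∞} = {f ∈ L^p(μ) : for all λ > 0, ∑_{n=1}^∞ λ^n ‖|f|^n‖_p / n! < ∞}. Then E_{p,∞} is a linear subspace of L^p(μ). -/
/-!
The pointwise bound `|a x + b y| ≤ (|a| + |b|) max (|x|, |y|)` gives
`|a f + b g|ⁿ ≤ (|a| + |b|)ⁿ (|f|ⁿ + |g|ⁿ)`, and the quasi-triangle inequality in `Lᵖ` has a constant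
independent of `n`. Hence the exponential series of `a f + b g` at `λ` is dominated by a fixed
multiple of those of `f` and `g` at `λ (|a| + |b|)`, which are finite.
-/

open MeasureTheory ENNReal

section

variable {α : Type*} [MeasurableSpace α]

noncomputable def expNormSeries (μ : Measure α) (p : ℝ≥0∞) (lam : ℝ) (f : α → ℝ) : ℝ≥0∞ :=
  ∑' n : ℕ, ENNReal.ofReal (lam ^ (n + 1)) * ((Nat.factorial (n + 1) : ℝ≥0∞))⁻¹ *
    eLpNorm (fun x => |f x| ^ (n + 1)) p μ

lemma abs_mul_add_mul_pow_le (a b x y : ℝ) (m : ℕ) :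
    |a * x + b * y| ^ m ≤ (|a| + |b|) ^ m * (|x| ^ m + |y| ^ m) := by
  have hmax : |a * x + b * y| ≤ (|a| + |b|) * max |x| |y| := calc
    |a * x + b * y| ≤ |a| * |x| + |b| * |y| := by
      simpa only [abs_mul] using abs_add_le (a * x) (b * y)
    _ ≤ |a| * max |x| |y| + |b| * max |x| |y| := by gcongr; exacts [le_max_left _ _, le_max_right _ _]
    _ = (|a| + |b|) * max |x| |y| := by ring
  have hmax_pow : max |x| |y| ^ m ≤ |x| ^ m + |y| ^ m := by
    rcases max_cases |x| |y| with ⟨h, -⟩ | ⟨h, -⟩ <;> rw [h] <;> simp [pow_nonneg]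
  calc |a * x + b * y| ^ m ≤ ((|a| + |b|) * max |x| |y|) ^ m := by gcongr
    _ = (|a| + |b|) ^ m * max |x| |y| ^ m := mul_pow _ _ _
    _ ≤ (|a| + |b|) ^ m * (|x| ^ m + |y| ^ m) := by gcongr

lemma eLpNorm_abs_mul_add_mul_pow_le {μ : Measure α} (p : ℝ≥0∞) {f g : α → ℝ}
    (hf : AEStronglyMeasurable f μ) (hg : AEStronglyMeasurable g μ) (a b : ℝ) (m : ℕ) :
    eLpNorm (fun x => |a * f x + b * g x| ^ m) p μ ≤
      LpAddConst p * ENNReal.ofReal ((|a| + |b|) ^ m) *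
        (eLpNorm (fun x => |f x| ^ m) p μ + eLpNorm (fun x => |g x| ^ m) p μ) := by
  set F : α → ℝ := fun x => |f x| ^ m
  set G : α → ℝ := fun x => |g x| ^ m
  have hF : AEStronglyMeasurable F μ := hf.norm.pow m
  have hG : AEStronglyMeasurable G μ := hg.norm.pow m
  calc eLpNorm (fun x => |a * f x + b * g x| ^ m) p μ
      ≤ eLpNorm ((|a| + |b|) ^ m • (F + G)) p μ := eLpNorm_mono_real fun x => by
        simpa [F, G] using abs_mul_add_mul_pow_le a b (f x) (g x) m
    _ = ENNReal.ofReal ((|a| + |b|) ^ m) * eLpNorm (F + G) p μ := by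
        rw [eLpNorm_const_smul, Real.enorm_of_nonneg (by positivity)]
    _ ≤ ENNReal.ofReal ((|a| + |b|) ^ m) * (LpAddConst p * (eLpNorm F p μ + eLpNorm G p μ)) := by
        gcongr; exact eLpNorm_add_le' hF hG p
    _ = _ := by ring

lemma expNormSeries_mul_add_mul_le {μ : Measure α} {p : ℝ≥0∞} {f g : α → ℝ}
    (hf : AEStronglyMeasurable f μ) (hg : AEStronglyMeasurable g μ) (a b : ℝ) {lam : ℝ}
    (hlam : 0 ≤ lam) :
    expNormSeries μ p lam (fun x => a * f x + b * g x) ≤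
      LpAddConst p * (expNormSeries μ p (lam * (|a| + |b|)) f +
        expNormSeries μ p (lam * (|a| + |b|)) g) := by
  rw [expNormSeries, expNormSeries, expNormSeries, ← ENNReal.tsum_add, ← ENNReal.tsum_mul_left]
  refine ENNReal.tsum_le_tsum fun n => ?_
  calc ENNReal.ofReal (lam ^ (n + 1)) * ((Nat.factorial (n + 1) : ℝ≥0∞))⁻¹ *
        eLpNorm (fun x => |a * f x + b * g x| ^ (n + 1)) p μ
      ≤ ENNReal.ofReal (lam ^ (n + 1)) * ((Nat.factorial (n + 1) : ℝ≥0∞))⁻¹ *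
        (LpAddConst p * ENNReal.ofReal ((|a| + |b|) ^ (n + 1)) *
          (eLpNorm (fun x => |f x| ^ (n + 1)) p μ + eLpNorm (fun x => |g x| ^ (n + 1)) p μ)) := by
        gcongr; exact eLpNorm_abs_mul_add_mul_pow_le p hf hg a b (n + 1)
    _ = _ := by rw [mul_pow, ENNReal.ofReal_mul (by positivity)]; ring

lemma expNormSeries_ne_top_of_nonneg {μ : Measure α} {p : ℝ≥0∞} {f : α → ℝ}
    (h : ∀ lam : ℝ, 0 < lam → expNormSeries μ p lam f ≠ ⊤) {lam : ℝ} (hlam : 0 ≤ lam) :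
    expNormSeries μ p lam f ≠ ⊤ := by
  rcases hlam.eq_or_lt with rfl | hpos
  · simp [expNormSeries]
  · exact h lam hpos
end

theorem stmt7_general {α : Type*} [MeasurableSpace α] (μ : Measure α)
    (p : ℝ≥0∞) (f g : α → ℝ)
    (hfLp : MemLp f p μ) (hgLp : MemLp g p μ)
    (hfE : ∀ lam : ℝ, 0 < lam →
      ∑' n : ℕ, ENNReal.ofReal (lam ^ (n + 1)) * ((Nat.factorial (n + 1) : ℝ≥0∞))⁻¹ *
        eLpNorm (fun x => |f x| ^ (n + 1)) p μ ≠ ⊤)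
    (hgE : ∀ lam : ℝ, 0 < lam →
      ∑' n : ℕ, ENNReal.ofReal (lam ^ (n + 1)) * ((Nat.factorial (n + 1) : ℝ≥0∞))⁻¹ *
        eLpNorm (fun x => |g x| ^ (n + 1)) p μ ≠ ⊤)
    (a b : ℝ) :
    MemLp (fun x => a * f x + b * g x) p μ ∧
    ∀ lam : ℝ, 0 < lam →
      ∑' n : ℕ, ENNReal.ofReal (lam ^ (n + 1)) * ((Nat.factorial (n + 1) : ℝ≥0∞))⁻¹ *
        eLpNorm (fun x => |a * f x + b * g x| ^ (n + 1)) p μ ≠ ⊤ := by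
  refine ⟨(hfLp.const_mul a).add (hgLp.const_mul b), fun lam hlam => ?_⟩
  have hscaled : 0 ≤ lam * (|a| + |b|) := by positivity
  refine ne_top_of_le_ne_top ?_ (expNormSeries_mul_add_mul_le hfLp.1 hgLp.1 a b hlam.le)
  exact mul_ne_top (LpAddConst_lt_top p).ne <| add_ne_top.2
    ⟨expNormSeries_ne_top_of_nonneg hfE hscaled, expNormSeries_ne_top_of_nonneg hgE hscaled⟩

/-- the set `E_{p,∞}` of functions that are `(p,λ)`-exponentiable
for every `λ > 0` is a linear subspace of `L^p`. -/
theorem stmt7 {α : Type*} [MeasurableSpace α] (μ : Measure α)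
    (p : ℝ≥0∞) (hp : 1 ≤ p) (hp' : p ≠ ⊤) (f g : α → ℝ)
    (hf : AEStronglyMeasurable f μ) (hg : AEStronglyMeasurable g μ)
    (hfLp : MemLp f p μ) (hgLp : MemLp g p μ)
    (hfE : ∀ lam : ℝ, 0 < lam →
      ∑' n : ℕ, ENNReal.ofReal (lam ^ (n + 1)) * ((Nat.factorial (n + 1) : ℝ≥0∞))⁻¹ *
        eLpNorm (fun x => |f x| ^ (n + 1)) p μ ≠ ⊤)
    (hgE : ∀ lam : ℝ, 0 < lam →
      ∑' n : ℕ, ENNReal.ofReal (lam ^ (n + 1)) * ((Nat.factorial (n + 1) : ℝ≥0∞))⁻¹ *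
        eLpNorm (fun x => |g x| ^ (n + 1)) p μ ≠ ⊤)
    (a b : ℝ) :
    MemLp (fun x => a * f x + b * g x) p μ ∧
    ∀ lam : ℝ, 0 < lam →
      ∑' n : ℕ, ENNReal.ofReal (lam ^ (n + 1)) * ((Nat.factorial (n + 1) : ℝ≥0∞))⁻¹ *
        eLpNorm (fun x => |a * f x + b * g x| ^ (n + 1)) p μ ≠ ⊤ :=
  stmt7_general μ p f g hfLp hgLp hfE hgE a b
end

section
/- Let A be a Banach algebra and t ↦ A(t) a continuous bounded function on [0, T]. Then Exp_l(∫_0^t; -A(s)ds) · Exp_r(∫_0^t; A(s)ds) = 1 and Exp_r(∫_0^t; A(s)ds) · Exp_l(∫_0^t; -A(s)ds) = 1 for all t ∈ [0, T]. -/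
open MeasureTheory intervalIntegral

/-!
`F` and `G` are the Dyson series terms of `x' = x A` and `x' = -A x` with `x 0 = 1`. They are
bounded by `(C t)^n / n!`, so both series converge absolutely and their products are Cauchy
products; it suffices that the `n`-th Cauchy term vanishes for `n ≥ 1`. It does at `0`, and its
derivative is zero: for `F G` the derivative `∑_{p+q=n-1} (F_p A G_q - F_p A G_q)` cancels
termwise, while for `G F` it is `-A P + P A` with `P` the previous Cauchy term, which is `0` or
`1` by induction.
-/

open Finset ContinuousLinearMap

section DysonSeries

variable {E : Type*} [NormedAddCommGroup E] [NormedSpace ℝ E]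

/-- `B n` is the `n`-th term of the Dyson series solving `x' = L s x`, `x 0 = x₀`. -/
def IsDysonSeries (L : ℝ → E →L[ℝ] E) (x₀ : E) (B : ℕ → ℝ → E) : Prop :=
  (∀ s, B 0 s = x₀) ∧ ∀ n s, B (n + 1) s = ∫ u in (0 : ℝ)..s, L u (B n u)

namespace IsDysonSeries

variable {L : ℝ → E →L[ℝ] E} {x₀ : E} {B : ℕ → ℝ → E}

theorem hasDerivAt_zero (hB : IsDysonSeries L x₀ B) (s : ℝ) : HasDerivAt (B 0) 0 s := by
  rw [funext hB.1]
  exact hasDerivAt_const s x₀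

theorem continuous [CompleteSpace E] (hB : IsDysonSeries L x₀ B) (hL : Continuous L) (n : ℕ) :
    Continuous (B n) := by
  induction n with
  | zero => rw [funext hB.1]; exact continuous_const
  | succ n ih =>
    rw [funext (hB.2 n)]
    exact continuous_iff_continuousAt.2 fun s =>
      ((hL.clm_apply ih).integral_hasStrictDerivAt 0 s).hasDerivAt.continuousAt

theorem hasDerivAt_succ [CompleteSpace E] (hB : IsDysonSeries L x₀ B) (hL : Continuous L)
    (n : ℕ) (s : ℝ) :
    HasDerivAt (B (n + 1)) (L s (B n s)) s := by
  rw [funext (hB.2 n)]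
  exact ((hL.clm_apply (hB.continuous hL n)).integral_hasStrictDerivAt 0 s).hasDerivAt

theorem apply_succ_zero (hB : IsDysonSeries L x₀ B) (n : ℕ) : B (n + 1) 0 = 0 := by
  rw [hB.2 n 0, integral_same]

theorem norm_le {t C : ℝ} (hB : IsDysonSeries L x₀ B) (hC₀ : 0 ≤ C)
    (hC : ∀ u ∈ Set.Icc 0 t, ‖L u‖ ≤ C) (n : ℕ) :
    ∀ s ∈ Set.Icc 0 t, ‖B n s‖ ≤ ‖x₀‖ * ((C * s) ^ n / n.factorial) := by
  induction n with
  | zero => intro s _; simp [hB.1]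
  | succ n ih =>
    rintro s ⟨hs₀, hst⟩
    have hterm : ∀ u ∈ Set.Ioc 0 s,
        ‖L u (B n u)‖ ≤ (‖x₀‖ * C ^ (n + 1) / n.factorial) * u ^ n := by
      rintro u ⟨hu₀, hus⟩
      have hu : u ∈ Set.Icc 0 t := ⟨hu₀.le, hus.trans hst⟩
      calc ‖L u (B n u)‖ ≤ C * ‖B n u‖ :=
            (le_opNorm _ _).trans (mul_le_mul_of_nonneg_right (hC u hu) (norm_nonneg _))
        _ ≤ C * (‖x₀‖ * ((C * u) ^ n / n.factorial)) := by gcongr; exact ih u hu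
        _ = _ := by ring
    calc ‖B (n + 1) s‖
        ≤ ∫ u in (0 : ℝ)..s, (‖x₀‖ * C ^ (n + 1) / n.factorial) * u ^ n := by
          rw [hB.2 n s]
          exact intervalIntegral.norm_integral_le_of_norm_le hs₀ (.of_forall hterm)
            ((continuous_const.mul (continuous_pow n)).intervalIntegrable 0 s)
      _ = ‖x₀‖ * ((C * s) ^ (n + 1) / (n + 1).factorial) := by
          rw [intervalIntegral.integral_const_mul, integral_pow, Nat.factorial_succ]
          push_cast
          field_simp
          ring

theorem summable_norm (hB : IsDysonSeries L x₀ B) (hL : Continuous L) {t : ℝ} (ht : 0 ≤ t) :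
    Summable fun n => ‖B n t‖ := by
  obtain ⟨C, hC⟩ := (isCompact_Icc (a := 0) (b := t)).exists_bound_of_continuousOn hL.continuousOn
  have hC₀ : 0 ≤ C := (norm_nonneg _).trans (hC 0 ⟨le_rfl, ht⟩)
  exact .of_nonneg_of_le (fun n => norm_nonneg _) (fun n => hB.norm_le hC₀ hC n t ⟨ht, le_rfl⟩)
    ((Real.summable_pow_div_factorial (C * t)).mul_left ‖x₀‖)

end IsDysonSeries

end DysonSeries

section CauchyProduct

variable {𝔸 : Type*} [NormedRing 𝔸]

def cauchyProd (X Y : ℕ → ℝ → 𝔸) (n : ℕ) (s : ℝ) : 𝔸 :=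
  ∑ p ∈ antidiagonal n, X p.1 s * Y p.2 s

theorem tsum_mul_tsum_eq_one_of_cauchyProd [CompleteSpace 𝔸] {X Y : ℕ → ℝ → 𝔸} {t : ℝ}
    (hX : Summable fun n => ‖X n t‖) (hY : Summable fun n => ‖Y n t‖)
    (h : ∀ n, cauchyProd X Y n t = if n = 0 then 1 else 0) :
    (∑' n, X n t) * (∑' n, Y n t) = 1 := by
  rw [tsum_mul_tsum_eq_tsum_sum_antidiagonal_of_summable_norm hX hY]
  exact (tsum_congr h).trans (tsum_ite_eq 0 _)

variable [NormedAlgebra ℝ 𝔸] {LX LY : ℝ → 𝔸 →L[ℝ] 𝔸} {x₀ y₀ : 𝔸} {X Y : ℕ → ℝ → 𝔸}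

theorem cauchyProd_zero (hX : IsDysonSeries LX 1 X) (hY : IsDysonSeries LY 1 Y) (s : ℝ) :
    cauchyProd X Y 0 s = 1 := by
  simp [cauchyProd, hX.1, hY.1]

theorem hasDerivAt_cauchyProd_succ [CompleteSpace 𝔸] (hX : IsDysonSeries LX x₀ X)
    (hY : IsDysonSeries LY y₀ Y) (hLX : Continuous LX) (hLY : Continuous LY) (n : ℕ) (s : ℝ) :
    HasDerivAt (cauchyProd X Y (n + 1))
      (∑ p ∈ antidiagonal n, (LX s (X p.1 s) * Y p.2 s + X p.1 s * LY s (Y p.2 s))) s := by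
  let X' : ℕ → 𝔸 := fun k => Nat.casesOn k 0 fun k => LX s (X k s)
  let Y' : ℕ → 𝔸 := fun k => Nat.casesOn k 0 fun k => LY s (Y k s)
  have hX' : ∀ k, HasDerivAt (X k) (X' k) s := by
    rintro (_ | k)
    exacts [hX.hasDerivAt_zero s, hX.hasDerivAt_succ hLX k s]
  have hY' : ∀ k, HasDerivAt (Y k) (Y' k) s := by
    rintro (_ | k)
    exacts [hY.hasDerivAt_zero s, hY.hasDerivAt_succ hLY k s]
  refine (HasDerivAt.fun_sum (u := antidiagonal (n + 1)) fun p _ =>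
    (hX' p.1).mul (hY' p.2)).congr_deriv ?_
  rw [sum_add_distrib, Nat.sum_antidiagonal_succ, Nat.sum_antidiagonal_succ']
  simp [X', Y', sum_add_distrib]

theorem cauchyProd_succ_eq_zero (hX : IsDysonSeries LX x₀ X) (hY : IsDysonSeries LY y₀ Y)
    {n : ℕ} (hd : ∀ s, HasDerivAt (cauchyProd X Y (n + 1)) 0 s) (s : ℝ) :
    cauchyProd X Y (n + 1) s = 0 := by
  rw [is_const_of_deriv_eq_zero (fun u => (hd u).differentiableAt) (fun u => (hd u).deriv) s 0]
  simp [cauchyProd, Nat.sum_antidiagonal_succ, hX.apply_succ_zero, hY.apply_succ_zero]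

end CauchyProduct

section Expansionals

variable {𝔸 : Type*} [NormedRing 𝔸] [NormedAlgebra ℝ 𝔸] [CompleteSpace 𝔸] {A : ℝ → 𝔸}
  {F G : ℕ → ℝ → 𝔸}

theorem cauchyProd_rightExp_leftExp (hA : Continuous A)
    (hF : IsDysonSeries (fun s => (mul ℝ 𝔸).flip (A s)) 1 F)
    (hG : IsDysonSeries (fun s => mul ℝ 𝔸 (-A s)) 1 G) (n : ℕ) (s : ℝ) :
    cauchyProd F G n s = if n = 0 then 1 else 0 := by
  rcases n with _ | n
  · exact cauchyProd_zero hF hG s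
  refine cauchyProd_succ_eq_zero hF hG (fun u => ?_) s
  refine (hasDerivAt_cauchyProd_succ hF hG ((mul ℝ 𝔸).flip.continuous.comp hA)
    ((mul ℝ 𝔸).continuous.comp hA.neg) n u).congr_deriv ?_
  simp [mul_assoc]

theorem cauchyProd_leftExp_rightExp (hA : Continuous A)
    (hF : IsDysonSeries (fun s => (mul ℝ 𝔸).flip (A s)) 1 F)
    (hG : IsDysonSeries (fun s => mul ℝ 𝔸 (-A s)) 1 G) (n : ℕ) (s : ℝ) :
    cauchyProd G F n s = if n = 0 then 1 else 0 := by
  induction n generalizing s with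
  | zero => exact cauchyProd_zero hG hF s
  | succ n ih =>
    refine cauchyProd_succ_eq_zero hG hF (fun u => ?_) s
    refine (hasDerivAt_cauchyProd_succ hG hF ((mul ℝ 𝔸).continuous.comp hA.neg)
      ((mul ℝ 𝔸).flip.continuous.comp hA) n u).congr_deriv ?_
    have hcomm : -A u * cauchyProd G F n u + cauchyProd G F n u * A u = 0 := by
      rw [ih u]; split_ifs <;> simp
    simpa [cauchyProd, mul_sum, sum_mul, sum_add_distrib, mul_assoc] using hcomm

end Expansionals

theorem stmt13_general {𝔸 : Type*} [NormedRing 𝔸] [NormedAlgebra ℝ 𝔸]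
    [CompleteSpace 𝔸]
    (A : ℝ → 𝔸) (hA : Continuous A)
    (F G : ℕ → ℝ → 𝔸)
    (hF0 : ∀ t : ℝ, F 0 t = 1)
    (hFs : ∀ n : ℕ, ∀ t : ℝ, F (n + 1) t = ∫ s in (0 : ℝ)..t, F n s * A s)
    (hG0 : ∀ t : ℝ, G 0 t = 1)
    (hGs : ∀ n : ℕ, ∀ t : ℝ, G (n + 1) t = ∫ s in (0 : ℝ)..t, (-A s) * G n s)
    (t : ℝ) (ht : 0 ≤ t) :
    (∑' n : ℕ, G n t) * (∑' n : ℕ, F n t) = 1 ∧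
    (∑' n : ℕ, F n t) * (∑' n : ℕ, G n t) = 1 := by
  have hF : IsDysonSeries (fun s => (mul ℝ 𝔸).flip (A s)) 1 F := ⟨hF0, by simpa using hFs⟩
  have hG : IsDysonSeries (fun s => mul ℝ 𝔸 (-A s)) 1 G := ⟨hG0, by simpa using hGs⟩
  have hFsum := hF.summable_norm ((mul ℝ 𝔸).flip.continuous.comp hA) ht
  have hGsum := hG.summable_norm ((mul ℝ 𝔸).continuous.comp hA.neg) ht
  exact
    ⟨tsum_mul_tsum_eq_one_of_cauchyProd hGsum hFsum (cauchyProd_leftExp_rightExp hA hF hG · t),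
      tsum_mul_tsum_eq_one_of_cauchyProd hFsum hGsum (cauchyProd_rightExp_leftExp hA hF hG · t)⟩

/-- `Exp_l(∫_0^t; -A(s) ds)` and `Exp_r(∫_0^t; A(s) ds)` are mutually
inverse. `F n` is the `n`-th term of the right expansional of `A`, and `G n` the
`n`-th term of the left expansional of `-A`. -/
theorem stmt13 {𝔸 : Type*} [NormedRing 𝔸] [NormOneClass 𝔸] [NormedAlgebra ℝ 𝔸]
    [CompleteSpace 𝔸]
    (A : ℝ → 𝔸) (hA : Continuous A)
    (F G : ℕ → ℝ → 𝔸)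
    (hF0 : ∀ t : ℝ, F 0 t = 1)
    (hFs : ∀ n : ℕ, ∀ t : ℝ, F (n + 1) t = ∫ s in (0 : ℝ)..t, F n s * A s)
    (hG0 : ∀ t : ℝ, G 0 t = 1)
    (hGs : ∀ n : ℕ, ∀ t : ℝ, G (n + 1) t = ∫ s in (0 : ℝ)..t, (-A s) * G n s)
    (t : ℝ) (ht : 0 ≤ t) :
    (∑' n : ℕ, G n t) * (∑' n : ℕ, F n t) = 1 ∧
    (∑' n : ℕ, F n t) * (∑' n : ℕ, G n t) = 1 :=
  stmt13_general A hA F G hF0 hFs hG0 hGs t ht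
end

section
/- Let A be a Banach algebra and t ↦ A(t) a continuous bounded function. Then the cocycle identity holds: Exp_r(∫_0^t; A(s)ds) · Exp_r(∫_0^{t'}; A(s+t)ds) = Exp_r(∫_0^{t+t'}; A(s)ds). -/
/-!
Splitting `∫₀^{t+s}` at `t` and inducting on `n` shows that the terms of the expansional of `A`
at `t + s` are the Cauchy product of its terms at `t` with those of the shifted expansional at
`s`: `F n (t + s) = ∑_{i + j = n} F i t * F₂ j s`. The bound `‖F n u‖ ≤ (M |u|)ⁿ / n!`, with `M`
bounding `‖A‖` on `[[0, u]]`, makes both series absolutely summable, so the product of their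
sums is the sum of the Cauchy product.
-/

open MeasureTheory intervalIntegral Finset
open scoped Interval Nat

theorem abs_integral_abs_pow (u : ℝ) (n : ℕ) :
    |∫ s in (0 : ℝ)..u, |s| ^ n| = |u| ^ (n + 1) / (n + 1) := by
  have h_nonneg : ∀ v : ℝ, 0 ≤ v → ∫ s in (0 : ℝ)..v, |s| ^ n = v ^ (n + 1) / (n + 1) := by
    intro v hv
    rw [integral_congr (g := fun s => s ^ n) fun s hs => ?_, integral_pow]
    · simp
    · rw [Set.uIcc_of_le hv] at hs
      simp [abs_of_nonneg hs.1]
  rcases le_total 0 u with hu | hu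
  · rw [h_nonneg u hu, abs_of_nonneg hu, abs_of_nonneg (by positivity)]
  · have h_reflect : ∫ s in (0 : ℝ)..u, |s| ^ n = ∫ s in (-u)..0, |s| ^ n := by
      simpa using integral_comp_neg (a := 0) (b := u) (fun s => |s| ^ n)
    have hu' : 0 ≤ -u := neg_nonneg.mpr hu
    rw [h_reflect, integral_symm, abs_neg, h_nonneg (-u) hu', abs_of_nonpos hu,
      abs_of_nonneg (by positivity)]

section

variable {𝔸 : Type*} [NormedRing 𝔸] [NormedAlgebra ℝ 𝔸]

/-- `F n u` is the `n`-th term `∫_{u ≥ t₁ ≥ ⋯ ≥ tₙ ≥ 0} B(tₙ) ⋯ B(t₁)` of the right expansional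
of `B`, written as an iterated primitive. -/
structure IsRightExpansionalTerms (B : ℝ → 𝔸) (F : ℕ → ℝ → 𝔸) : Prop where
  zero : ∀ u, F 0 u = 1
  succ : ∀ n u, F (n + 1) u = ∫ s in (0 : ℝ)..u, F n s * B s

namespace IsRightExpansionalTerms

variable {B : ℝ → 𝔸} {F : ℕ → ℝ → 𝔸}

theorem continuous (hF : IsRightExpansionalTerms B F) (hB : Continuous B) (n : ℕ) :
    Continuous (F n) := by
  induction n with
  | zero => simpa [funext hF.zero] using continuous_const
  | succ n ih =>
    rw [funext (hF.succ n)]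
    exact continuous_primitive (fun a b => (ih.mul hB).intervalIntegrable a b) 0

theorem norm_le [NormOneClass 𝔸] (hF : IsRightExpansionalTerms B F) {M T : ℝ}
    (hM : ∀ s ∈ [[0, T]], ‖B s‖ ≤ M) (n : ℕ) :
    ∀ u ∈ [[0, T]], ‖F n u‖ ≤ M ^ n * |u| ^ n / n ! := by
  have hM0 : 0 ≤ M := (norm_nonneg _).trans (hM 0 Set.left_mem_uIcc)
  induction n with
  | zero => intro u _; simp [hF.zero]
  | succ n ih =>
    intro u hu
    have h_pointwise : ∀ s ∈ Ι 0 u, ‖F n s * B s‖ ≤ M ^ (n + 1) / n ! * |s| ^ n := by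
      intro s hs
      have hsT : s ∈ [[0, T]] := Set.uIcc_subset_uIcc_left hu (Set.uIoc_subset_uIcc hs)
      calc ‖F n s * B s‖ ≤ ‖F n s‖ * ‖B s‖ := norm_mul_le _ _
        _ ≤ M ^ n * |s| ^ n / n ! * M :=
          mul_le_mul (ih s hsT) (hM s hsT) (norm_nonneg _) (by positivity)
        _ = M ^ (n + 1) / n ! * |s| ^ n := by ring
    calc ‖F (n + 1) u‖ ≤ |∫ s in (0 : ℝ)..u, M ^ (n + 1) / n ! * |s| ^ n| := by
          rw [hF.succ]
          exact norm_integral_le_abs_of_norm_le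
            (ae_restrict_of_forall_mem measurableSet_uIoc h_pointwise)
            ((continuous_const.mul (continuous_abs.pow n)).intervalIntegrable _ _)
      _ = M ^ (n + 1) * |u| ^ (n + 1) / (n + 1)! := by
          rw [intervalIntegral.integral_const_mul, abs_mul, abs_integral_abs_pow,
            abs_of_nonneg (by positivity), Nat.factorial_succ]
          push_cast
          field_simp

theorem summable_norm [NormOneClass 𝔸] (hF : IsRightExpansionalTerms B F) (hB : Continuous B)
    (u : ℝ) : Summable fun n => ‖F n u‖ := by
  obtain ⟨M, hM⟩ := (isCompact_uIcc (a := 0) (b := u)).exists_bound_of_continuousOn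
    hB.continuousOn
  refine .of_nonneg_of_le (fun n => norm_nonneg _) (fun n => ?_)
    (Real.summable_pow_div_factorial (M * |u|))
  rw [mul_pow]
  exact hF.norm_le hM n u Set.right_mem_uIcc

theorem add_eq_sum_antidiagonal [CompleteSpace 𝔸] (hF : IsRightExpansionalTerms B F)
    (hB : Continuous B) {t : ℝ} {G : ℕ → ℝ → 𝔸}
    (hG : IsRightExpansionalTerms (fun s => B (s + t)) G) (n : ℕ) (s : ℝ) :
    F n (t + s) = ∑ p ∈ antidiagonal n, F p.1 t * G p.2 s := by
  induction n generalizing s with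
  | zero => simp [hF.zero, hG.zero]
  | succ n ih =>
    have hB_shift : Continuous fun r => B (r + t) := hB.comp (continuous_add_const t)
    have hFB : Continuous fun r => F n r * B r := (hF.continuous hB n).mul hB
    have hGB : ∀ k, Continuous fun r => G k r * B (r + t) :=
      fun k => (hG.continuous hB_shift k).mul hB_shift
    calc F (n + 1) (t + s) = F (n + 1) t + ∫ r in (0 : ℝ)..s, F n (t + r) * B (r + t) := by
          rw [hF.succ, hF.succ, ← integral_add_adjacent_intervals (hFB.intervalIntegrable 0 t)
            (hFB.intervalIntegrable t (t + s))]
          congr 1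
          simpa [add_comm _ t] using
            (integral_comp_add_left (fun r => F n r * B r) t (a := 0) (b := s)).symm
      _ = F (n + 1) t +
            ∑ p ∈ antidiagonal n, F p.1 t * ∫ r in (0 : ℝ)..s, G p.2 r * B (r + t) := by
          simp only [ih, sum_mul, mul_assoc]
          rw [integral_finsetSum fun p _ => (continuous_const.mul (hGB p.2)).intervalIntegrable 0 s]
          refine congrArg _ (sum_congr rfl fun p _ => ?_)
          exact (ContinuousLinearMap.mul ℝ 𝔸 (F p.1 t)).intervalIntegral_comp_comm
            ((hGB p.2).intervalIntegrable 0 s)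
      _ = ∑ p ∈ antidiagonal (n + 1), F p.1 t * G p.2 s := by
          simp [Nat.sum_antidiagonal_succ', hG.zero, hG.succ]

end IsRightExpansionalTerms

end

theorem stmt14_general {𝔸 : Type*} [NormedRing 𝔸] [NormOneClass 𝔸] [NormedAlgebra ℝ 𝔸]
    [CompleteSpace 𝔸]
    (A : ℝ → 𝔸) (hA : Continuous A) (t t' : ℝ)
    (F F₂ : ℕ → ℝ → 𝔸)
    (hF0 : ∀ u : ℝ, F 0 u = 1)
    (hFs : ∀ n : ℕ, ∀ u : ℝ, F (n + 1) u = ∫ s in (0 : ℝ)..u, F n s * A s)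
    (hF₂0 : ∀ u : ℝ, F₂ 0 u = 1)
    (hF₂s : ∀ n : ℕ, ∀ u : ℝ, F₂ (n + 1) u = ∫ s in (0 : ℝ)..u, F₂ n s * A (s + t)) :
    (∑' n : ℕ, F n t) * (∑' n : ℕ, F₂ n t') = ∑' n : ℕ, F n (t + t') := by
  have hF : IsRightExpansionalTerms A F := ⟨hF0, hFs⟩
  have hF₂ : IsRightExpansionalTerms (fun s => A (s + t)) F₂ := ⟨hF₂0, hF₂s⟩
  rw [tsum_mul_tsum_eq_tsum_sum_antidiagonal_of_summable_norm (hF.summable_norm hA t)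
    (hF₂.summable_norm (hA.comp (continuous_add_const t)) t')]
  exact tsum_congr fun n => (hF.add_eq_sum_antidiagonal hA hF₂ n t').symm

/-- cocycle identity for the right expansional:
`Exp_r(∫_0^t; A(s)ds) · Exp_r(∫_0^{t'}; A(s+t)ds) = Exp_r(∫_0^{t+t'}; A(s)ds)`.
`F n` is the `n`-th term of the right expansional of `A`, and `F₂ n` the `n`-th term of
the right expansional of `s ↦ A(s + t)`. -/
theorem stmt14 {𝔸 : Type*} [NormedRing 𝔸] [NormOneClass 𝔸] [NormedAlgebra ℝ 𝔸]
    [CompleteSpace 𝔸]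
    (A : ℝ → 𝔸) (hA : Continuous A) (t t' : ℝ) (ht : 0 ≤ t) (ht' : 0 ≤ t')
    (F F₂ : ℕ → ℝ → 𝔸)
    (hF0 : ∀ u : ℝ, F 0 u = 1)
    (hFs : ∀ n : ℕ, ∀ u : ℝ, F (n + 1) u = ∫ s in (0 : ℝ)..u, F n s * A s)
    (hF₂0 : ∀ u : ℝ, F₂ 0 u = 1)
    (hF₂s : ∀ n : ℕ, ∀ u : ℝ, F₂ (n + 1) u = ∫ s in (0 : ℝ)..u, F₂ n s * A (s + t)) :
    (∑' n : ℕ, F n t) * (∑' n : ℕ, F₂ n t') = ∑' n : ℕ, F n (t + t') :=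
  stmt14_general A hA t t' F F₂ hF0 hFs hF₂0 hF₂s
end

section
/- Let μ be a measure, q ≥ 1, and Q a nonnegative function lying in L^{4mq}(μ) for all m ≥ 1. For integers 1 ≤ l ≤ n-1: ‖Q‖_{4lq}^l · ‖Q‖_{4(n-l)q}^{n-l} ≤ ‖Q‖_{4q} · ‖Q‖_{4(n-1)q}^{n-1}. -/
/-!
By Hölder's inequality `s ↦ log ∫⁻ Q ^ s` is convex on `[0, ∞)`. Hence if `a ≤ s ≤ b` and
`s + t = a + b`, writing `s` and `t` as the mirror convex combinations `θa + (1-θ)b` and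
`(1-θ)a + θb` gives `∫⁻ Q^s · ∫⁻ Q^t ≤ ∫⁻ Q^a · ∫⁻ Q^b`. Apply this to `a = 4q`, `s = 4lq`,
`b = 4(n-1)q`, `t = 4(n-l)q`, and take `1/(4q)`-th powers: `‖Q‖_{4mq}^m = (∫⁻ Q^{4mq})^{1/(4q)}`.
-/

open MeasureTheory ENNReal

section LogConvexity

variable {α : Type*} [MeasurableSpace α] {μ : Measure α} {Q : α → ℝ≥0∞}

theorem lintegral_rpow_convexComb_le (hQ : AEMeasurable Q μ) {a b θ : ℝ} (ha : 0 ≤ a)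
    (hb : 0 ≤ b) (hθ₀ : 0 ≤ θ) (hθ₁ : θ ≤ 1) :
    ∫⁻ x, Q x ^ (θ * a + (1 - θ) * b) ∂μ ≤
      (∫⁻ x, Q x ^ a ∂μ) ^ θ * (∫⁻ x, Q x ^ b ∂μ) ^ (1 - θ) := by
  have h1θ : 0 ≤ 1 - θ := by linarith
  refine le_of_eq_of_le (lintegral_congr fun x => ?_)
    (lintegral_mul_norm_pow_le (hQ.pow_const a) (hQ.pow_const b) hθ₀ h1θ (by ring))
  rw [ENNReal.rpow_add_of_nonneg _ _ (mul_nonneg hθ₀ ha) (mul_nonneg h1θ hb),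
    ← ENNReal.rpow_mul, ← ENNReal.rpow_mul, mul_comm a, mul_comm b]

theorem lintegral_rpow_mul_lintegral_rpow_le (hQ : AEMeasurable Q μ) {a b s t : ℝ}
    (ha : 0 ≤ a) (has : a ≤ s) (hsb : s ≤ b) (hst : s + t = a + b) :
    (∫⁻ x, Q x ^ s ∂μ) * (∫⁻ x, Q x ^ t ∂μ) ≤
      (∫⁻ x, Q x ^ a ∂μ) * (∫⁻ x, Q x ^ b ∂μ) := by
  -- for `a = b` this is the junk value `θ = 0`, and `hθ` still holds because then `s = b`
  set θ := (b - s) / (b - a)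
  have hθ : θ * (b - a) = b - s := by
    rcases (has.trans hsb).eq_or_lt with hab | hab
    · simp [θ, ← hab, le_antisymm has (hab ▸ hsb)]
    · exact div_mul_cancel₀ _ (sub_ne_zero.mpr hab.ne')
  have hθ₀ : 0 ≤ θ := div_nonneg (by linarith) (by linarith)
  have hθ₁ : θ ≤ 1 := div_le_one_of_le₀ (by linarith) (by linarith)
  have hb : 0 ≤ b := by linarith
  have hs : θ * a + (1 - θ) * b = s := by linarith
  have ht : (1 - θ) * a + (1 - (1 - θ)) * b = t := by linarith
  calc (∫⁻ x, Q x ^ s ∂μ) * (∫⁻ x, Q x ^ t ∂μ)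
      ≤ ((∫⁻ x, Q x ^ a ∂μ) ^ θ * (∫⁻ x, Q x ^ b ∂μ) ^ (1 - θ)) *
          ((∫⁻ x, Q x ^ a ∂μ) ^ (1 - θ) * (∫⁻ x, Q x ^ b ∂μ) ^ (1 - (1 - θ))) := by
        rw [← hs, ← ht]
        exact mul_le_mul' (lintegral_rpow_convexComb_le hQ ha hb hθ₀ hθ₁)
          (lintegral_rpow_convexComb_le hQ ha hb (by linarith) (by linarith))
    _ = (∫⁻ x, Q x ^ a ∂μ) * (∫⁻ x, Q x ^ b ∂μ) := by
        rw [sub_sub_cancel 1 θ, mul_mul_mul_comm, ← ENNReal.rpow_add_of_nonneg _ _ hθ₀ (by linarith),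
          ← ENNReal.rpow_add_of_nonneg _ _ (by linarith) hθ₀,
          add_sub_cancel, sub_add_cancel, ENNReal.rpow_one, ENNReal.rpow_one]

end LogConvexity

theorem ENNReal.rpow_one_div_mul_pow {x : ℝ≥0∞} {c q r : ℝ} {m : ℕ} (hm : (m : ℝ) = r)
    (hr : r ≠ 0) : (x ^ (1 / (c * r * q))) ^ m = x ^ (1 / (c * q)) := by
  rw [← ENNReal.rpow_natCast, ← ENNReal.rpow_mul, hm]
  congr 1
  rw [one_div, one_div, mul_inv, mul_inv, mul_inv]
  field_simp

theorem stmt19_general {α : Type*} [MeasurableSpace α] (μ : Measure α)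
    (Q : α → ℝ≥0∞) (hQ : Measurable Q) (q : ℝ) (hq : 1 ≤ q)
    (n l : ℕ) (hl : 1 ≤ l) (hln : l ≤ n - 1) :
    ((∫⁻ x, Q x ^ (4 * (l : ℝ) * q) ∂μ) ^ (1 / (4 * (l : ℝ) * q))) ^ l *
      ((∫⁻ x, Q x ^ (4 * ((n : ℝ) - l) * q) ∂μ) ^ (1 / (4 * ((n : ℝ) - l) * q))) ^ (n - l) ≤
    (∫⁻ x, Q x ^ (4 * q) ∂μ) ^ (1 / (4 * q)) *
      ((∫⁻ x, Q x ^ (4 * ((n : ℝ) - 1) * q) ∂μ) ^ (1 / (4 * ((n : ℝ) - 1) * q))) ^ (n - 1) := by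
  have hl' : (1 : ℝ) ≤ l := by exact_mod_cast hl
  have hln' : (l : ℝ) ≤ n - 1 := by
    rw [← Nat.cast_one, ← Nat.cast_sub (by omega)]; exact_mod_cast hln
  rw [ENNReal.rpow_one_div_mul_pow rfl (by positivity),
    ENNReal.rpow_one_div_mul_pow (Nat.cast_sub (by omega)) (by linarith),
    ENNReal.rpow_one_div_mul_pow (by rw [Nat.cast_sub (by omega), Nat.cast_one]) (by linarith),
    ← ENNReal.mul_rpow_of_nonneg _ _ (by positivity),
    ← ENNReal.mul_rpow_of_nonneg _ _ (by positivity)]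
  refine ENNReal.rpow_le_rpow ?_ (by positivity)
  exact lintegral_rpow_mul_lintegral_rpow_le hQ.aemeasurable (by positivity)
    (by nlinarith) (by nlinarith) (by ring)

/-- log-convexity bound for `L^p` norms: for `1 ≤ l ≤ n-1`,
`‖Q‖_{4lq}^l ‖Q‖_{4(n-l)q}^{n-l} ≤ ‖Q‖_{4q} ‖Q‖_{4(n-1)q}^{n-1}`, where
`‖Q‖_s = (∫ Q^s dμ)^{1/s}`. -/
theorem stmt19 {α : Type*} [MeasurableSpace α] (μ : Measure α)
    (Q : α → ℝ≥0∞) (hQ : Measurable Q) (q : ℝ) (hq : 1 ≤ q)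
    (hLp : ∀ m : ℕ, 1 ≤ m → ∫⁻ x, Q x ^ (4 * (m : ℝ) * q) ∂μ ≠ ⊤)
    (n l : ℕ) (hn : 2 ≤ n) (hl : 1 ≤ l) (hln : l ≤ n - 1) :
    ((∫⁻ x, Q x ^ (4 * (l : ℝ) * q) ∂μ) ^ (1 / (4 * (l : ℝ) * q))) ^ l *
      ((∫⁻ x, Q x ^ (4 * ((n : ℝ) - l) * q) ∂μ) ^ (1 / (4 * ((n : ℝ) - l) * q))) ^ (n - l) ≤
    (∫⁻ x, Q x ^ (4 * q) ∂μ) ^ (1 / (4 * q)) *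
      ((∫⁻ x, Q x ^ (4 * ((n : ℝ) - 1) * q) ∂μ) ^ (1 / (4 * ((n : ℝ) - 1) * q))) ^ (n - 1) :=
  stmt19_general μ Q hQ q hq n l hl hln
end
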